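/- Let G(s) = P(s)C(s) be a rational function with a pole at p in the open right half-plane. Then there exists N ∈ ℕ such that S_N(s) = [(I + G(s)L_N)^{-1}]_{1,1} has a pole in the closed right half-plane; equivalently sup_N ‖S_N‖_∞ = ∞. -/

import Mathlib

open Matrix

/-- The `N×N` tridiagonal matrix with diagonal `(1,2,2,...,2)` and off-diagonal entries `-1`. -/
def Lmat (R : Type*) [Ring R] (N : ℕ) : Matrix (Fin N) (Fin N) R :=
  Matrix.of fun i j =>
    if i = j then (if (i : ℕ) = 0 then 1 else 2)
    else if (i : ℕ) + 1 = (j : ℕ) ∨ (j : ℕ) + 1 = (i : ℕ) then -1 else 0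

/-- The `N×N` tridiagonal matrix with diagonal `2` and off-diagonal entries `-1`. -/
def Lbar (R : Type*) [Ring R] (N : ℕ) : Matrix (Fin N) (Fin N) R :=
  Matrix.of fun i j =>
    if i = j then 2
    else if (i : ℕ) + 1 = (j : ℕ) ∨ (j : ℕ) + 1 = (i : ℕ) then -1 else 0

/-- `μ` is an eigenvalue of the matrix `A`. -/
def IsEig {R : Type*} [CommRing R] {N : ℕ} (A : Matrix (Fin N) (Fin N) R) (μ : R) : Prop :=
  ∃ v : Fin N → R, v ≠ 0 ∧ A.mulVec v = μ • v

/-!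
Near the pole `p` the function `1 / G = denom / num` is analytic, vanishes at `p` and is not
constant, so by the open mapping theorem `G` maps the right half-plane onto a neighbourhood of
`∞`. The matrix `L_N` has the eigenvalue `μ_N = 2 - 2 cos (π / (2N + 1)) → 0`, with
eigenvector `(cos ((k + 1/2) π / (2N + 1)))_k`; hence `G z = -1 / μ_N` for some `z` in the right
half-plane, and there `I + G(z) L_N` is singular.

For the blow-up, the cofactor formula gives
`(I + g L_N)⁻¹₀₀ = det (I + g L̄_{N-1}) / det (I + g L_N)`. The numerator does not vanish at
`g = -1 / μ_N`: an eigenvector of `L̄_{N-1}` with eigenvalue `2 - 2c` solves the Chebyshev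
recurrence, which forces `U_{N-1}(c) = 0`, whereas `U_{N-1}(cos θ) sin θ = sin (N θ) > 0` for
`θ = π / (2N + 1)`. So the entry is unbounded as `g → -1 / μ_N`, and all `g` close to
`-1 / μ_N` are values of `G` on the right half-plane.
-/

open Filter Topology Finset Polynomial Polynomial.Chebyshev Bornology

section Tridiagonal

variable {R : Type*} [Ring R]

def tridiag (d : ℕ → R) (N : ℕ) : Matrix (Fin N) (Fin N) R :=
  Matrix.of fun i j =>
    if i = j then d i
    else if (i : ℕ) + 1 = (j : ℕ) ∨ (j : ℕ) + 1 = (i : ℕ) then -1 else 0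

theorem Lmat_eq_tridiag (N : ℕ) : Lmat R N = tridiag (fun k => if k = 0 then 1 else 2) N := rfl

theorem Lbar_eq_tridiag (N : ℕ) : Lbar R N = tridiag (fun _ => 2) N := rfl

theorem tridiag_mulVec_apply {d : ℕ → R} {N : ℕ} {x : ℕ → R} (hx : x N = 0) (i : ℕ)
    (hi : i < N) :
    (tridiag d N *ᵥ fun j => x j) ⟨i, hi⟩
      = d i * x i - x (i + 1) - ∑ j ∈ range N, if j + 1 = i then x j else 0 := by
  have hentry : ∀ j, (if i = j then d i else if i + 1 = j ∨ j + 1 = i then -1 else 0) * x j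
      = (if i = j then d i * x j else 0) - (if i + 1 = j then x j else 0)
        - (if j + 1 = i then x j else 0) := by
    intro j
    split_ifs <;> first | omega | simp
  have hnext : (if i + 1 < N then x (i + 1) else 0) = x (i + 1) := by
    split_ifs with h
    · rfl
    · rw [show i + 1 = N by omega, hx]
  simp only [Matrix.mulVec, dotProduct, tridiag, Matrix.of_apply, Fin.ext_iff]
  rw [Fin.sum_univ_eq_sum_range (fun j => (if i = j then d i
    else if i + 1 = j ∨ j + 1 = i then -1 else 0) * x j)]
  simp only [hentry, sum_sub_distrib, sum_ite_eq, mem_range, hi, if_true, hnext]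

theorem tridiag_mulVec_apply_zero {d : ℕ → R} {N : ℕ} {x : ℕ → R} (hx : x N = 0)
    (hN : 0 < N) : (tridiag d N *ᵥ fun j => x j) ⟨0, hN⟩ = d 0 * x 0 - x 1 := by
  simp [tridiag_mulVec_apply hx]

theorem tridiag_mulVec_apply_succ {d : ℕ → R} {N : ℕ} {x : ℕ → R} (hx : x N = 0) (k : ℕ)
    (hk : k + 1 < N) :
    (tridiag d N *ᵥ fun j => x j) ⟨k + 1, hk⟩ = d (k + 1) * x (k + 1) - x (k + 2) - x k := by
  simp [tridiag_mulVec_apply hx, sum_ite_eq', show k < N by omega]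

end Tridiagonal

theorem IsEig.map {R S : Type*} [CommRing R] [CommRing S] {N : ℕ}
    {A : Matrix (Fin N) (Fin N) R} {μ : R} (f : R →+* S) (hf : Function.Injective f)
    (h : IsEig A μ) : IsEig (A.map f) (f μ) := by
  obtain ⟨v, hv, hAv⟩ := h
  refine ⟨f ∘ v, fun h0 => hv (funext fun i => hf ?_), funext fun i => ?_⟩
  · simpa using congrFun h0 i
  · rw [← RingHom.map_mulVec, hAv, Pi.smul_apply, smul_eq_mul, map_mul]
    rfl

theorem Lmat_map {R S : Type*} [Ring R] [Ring S] (f : R →+* S) (N : ℕ) :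
    (Lmat R N).map f = Lmat S N := by
  ext i j
  rw [Matrix.map_apply, Lmat, Lmat, Matrix.of_apply, Matrix.of_apply]
  split_ifs <;> first | simp | exact map_ofNat f 2

noncomputable def lmatEig (N : ℕ) : ℝ := 2 - 2 * Real.cos (Real.pi / (2 * N + 1))

theorem lmatEig_pos {N : ℕ} (hN : 0 < N) : 0 < lmatEig N := by
  have hN' : (1 : ℝ) ≤ N := by exact_mod_cast hN
  have hθ : 0 < Real.pi / (2 * N + 1) := by positivity
  have hθπ : Real.pi / (2 * N + 1) ≤ Real.pi := div_le_self Real.pi_pos.le (by linarith)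
  have := Real.cos_lt_cos_of_nonneg_of_le_pi le_rfl hθπ hθ
  rw [Real.cos_zero] at this
  unfold lmatEig
  linarith

theorem tendsto_lmatEig : Tendsto lmatEig atTop (𝓝[>] 0) := by
  refine tendsto_nhdsWithin_iff.2 ⟨?_, eventually_atTop.2 ⟨1, fun N hN => lmatEig_pos hN⟩⟩
  have hθ : Tendsto (fun N : ℕ => Real.pi / (2 * N + 1)) atTop (𝓝 0) :=
    tendsto_const_nhds.div_atTop <| tendsto_atTop_add_const_right _ _
      (tendsto_natCast_atTop_atTop.const_mul_atTop two_pos)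
  have := (((Real.continuous_cos.tendsto 0).comp hθ).const_mul 2).const_sub 2
  convert this using 2 with N <;> simp [lmatEig]

theorem isEig_Lmat_real {N : ℕ} (hN : 0 < N) : IsEig (Lmat ℝ N) (lmatEig N) := by
  set θ := Real.pi / (2 * N + 1) with hθ
  have hθ0 : 0 < θ := by positivity
  have hθπ : θ < Real.pi :=
    div_lt_self Real.pi_pos (by linarith [(Nat.one_le_cast.2 hN : (1 : ℝ) ≤ N)])
  set x : ℕ → ℝ := fun k => Real.cos ((k + 1 / 2) * θ) with hx
  have hxN : x N = 0 := by
    have : ((N : ℝ) + 1 / 2) * θ = Real.pi / 2 := by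
      rw [hθ]; field_simp
    simp only [hx, this, Real.cos_pi_div_two]
  have hcos (a : ℝ) : Real.cos (a + θ) + Real.cos (a - θ) = 2 * Real.cos θ * Real.cos a := by
    rw [Real.cos_add, Real.cos_sub]; ring
  -- Row `0` (diagonal entry `1`) is the recurrence with `x (-1) := cos (-θ / 2) = x 0`.
  have hrec0 : x 1 + x 0 = 2 * Real.cos θ * x 0 := by
    convert hcos (θ / 2) using 2 <;> simp only [hx]
    · congr 1; push_cast; ring
    · rw [← Real.cos_neg]; congr 1; push_cast; ring
    · congr 1; push_cast; ring
  have hrec (k : ℕ) : x (k + 2) + x k = 2 * Real.cos θ * x (k + 1) := by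
    convert hcos ((k + 1 + 1 / 2) * θ) using 2 <;> simp only [hx] <;> congr 1 <;> push_cast <;>
      ring
  have hx0 : 0 < x 0 :=
    Real.cos_pos_of_mem_Ioo ⟨by push_cast; linarith, by push_cast; linarith⟩
  refine ⟨fun j => x j, fun h => hx0.ne' (congrFun h ⟨0, hN⟩), funext fun i => ?_⟩
  rw [Lmat_eq_tridiag]
  obtain ⟨_ | k, hk⟩ := i
  · rw [tridiag_mulVec_apply_zero hxN]
    simp only [Pi.smul_apply, smul_eq_mul, lmatEig, ← hθ, if_true]
    linarith
  · rw [tridiag_mulVec_apply_succ hxN]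
    simp only [Pi.smul_apply, smul_eq_mul, lmatEig, ← hθ, Nat.add_one_ne_zero, if_false]
    linarith [hrec k]

theorem isEig_Lmat {N : ℕ} (hN : 0 < N) : IsEig (Lmat ℂ N) (lmatEig N) := by
  simpa [Lmat_map] using (isEig_Lmat_real hN).map Complex.ofRealHom Complex.ofReal_injective

theorem chebyshevU_eval_eq_zero_of_isEig_Lbar {K : Type*} [Field K] {M : ℕ} {c : K}
    (h : IsEig (Lbar K M) (2 - 2 * c)) : (U K M).eval c = 0 := by
  obtain ⟨u, hu, hLu⟩ := h
  set x : ℕ → K := fun k => if hk : k < M then u ⟨k, hk⟩ else 0 with hx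
  have hxM : x M = 0 := dif_neg (lt_irrefl M)
  have hux : (fun j : Fin M => x j) = u := funext fun j => dif_pos j.isLt
  rw [← hux, Lbar_eq_tridiag] at hLu
  have hrow0 (hM : 0 < M) : x 1 = 2 * c * x 0 := by
    have := congrFun hLu ⟨0, hM⟩
    rw [tridiag_mulVec_apply_zero hxM, Pi.smul_apply, smul_eq_mul] at this
    linear_combination -this
  have hrow (k : ℕ) (hk : k + 1 < M) : x (k + 2) = 2 * c * x (k + 1) - x k := by
    have := congrFun hLu ⟨k + 1, hk⟩
    rw [tridiag_mulVec_apply_succ hxM, Pi.smul_apply, smul_eq_mul] at this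
    linear_combination -this
  have hU (k : ℕ) (hk : k + 1 ≤ M) :
      x k = x 0 * (U K k).eval c ∧ x (k + 1) = x 0 * (U K (k + 1)).eval c := by
    induction k with
    | zero => simp [U_one, hrow0 hk, mul_comm]
    | succ k ih =>
      obtain ⟨h0, h1⟩ := ih (by omega)
      refine ⟨by exact_mod_cast h1, ?_⟩
      rw [hrow k (by omega), h0, h1, show ((k + 1 : ℕ) : ℤ) + 1 = k + 2 by push_cast; ring,
        U_add_two]
      simp only [eval_sub, eval_mul, eval_ofNat, eval_X]
      ring
  obtain _ | m := M
  · exact absurd (Subsingleton.elim u 0) hu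
  by_contra hUm
  have hx0 : x 0 = 0 := by
    have := (hU m le_rfl).2
    rw [hxM] at this
    exact (mul_eq_zero.1 this.symm).resolve_right (by exact_mod_cast hUm)
  refine hu (funext fun j => ?_)
  rw [← hux]
  simp [(hU j (by omega)).1, hx0]

theorem not_isEig_Lbar (n : ℕ) : ¬ IsEig (Lbar ℂ n) (lmatEig (n + 1)) := by
  set θ : ℝ := Real.pi / (2 * ((n + 1 : ℕ) : ℝ) + 1) with hθ
  have hμ : ((lmatEig (n + 1) : ℝ) : ℂ) = 2 - 2 * Complex.cos θ := by
    rw [lmatEig, hθ]; push_cast; rfl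
  intro h
  rw [hμ] at h
  have hU : (U ℂ n).eval (Complex.cos θ) = 0 := chebyshevU_eval_eq_zero_of_isEig_Lbar h
  have hsin := U_complex_cos (θ : ℂ) n
  rw [hU, zero_mul] at hsin
  have hlt : ((n : ℝ) + 1) * θ < Real.pi := by
    rw [hθ, mul_div_assoc', div_lt_iff₀ (by positivity)]
    push_cast
    nlinarith [Real.pi_pos]
  have hpos : 0 < Real.sin ((n + 1) * θ) := Real.sin_pos_of_pos_of_lt_pi (by positivity) hlt
  exact hpos.ne' (by exact_mod_cast hsin.symm)

theorem Lmat_submatrix_succ {R : Type*} [Ring R] (n : ℕ) :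
    (Lmat R (n + 1)).submatrix Fin.succ Fin.succ = Lbar R n := by
  ext i j
  simp only [Lmat, Lbar, Matrix.submatrix_apply, Matrix.of_apply, Fin.succ_inj, Fin.val_succ,
    Nat.add_one_ne_zero, if_false, Nat.add_right_cancel_iff]

theorem det_one_add_neg_inv_smul_eq_zero_iff {K : Type*} [Field K] {N : ℕ}
    {A : Matrix (Fin N) (Fin N) K} {μ : K} (hμ : μ ≠ 0) :
    det (1 + (-μ⁻¹) • A) = 0 ↔ IsEig A μ := by
  rw [← Matrix.exists_mulVec_eq_zero_iff]
  refine exists_congr fun v => and_congr_right fun _ => ?_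
  rw [add_mulVec, one_mulVec, smul_mulVec, add_eq_zero_iff_eq_neg, neg_smul, neg_neg,
    eq_inv_smul_iff₀ hμ, eq_comm]

/-- When `A` is singular both sides are `0`. -/
theorem inv_apply_zero_zero {K : Type*} [Field K] {n : ℕ}
    (A : Matrix (Fin (n + 1)) (Fin (n + 1)) K) :
    A⁻¹ 0 0 = det (A.submatrix Fin.succ Fin.succ) / det A := by
  rw [Matrix.inv_def, Matrix.smul_apply, adjugate_fin_succ_eq_det_submatrix, Ring.inverse_eq_inv']
  simp [div_eq_inv_mul]

theorem Polynomial.eventually_nhdsNE_eval_ne_zero {K : Type*} [CommRing K] [IsDomain K]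
    [TopologicalSpace K] [T1Space K] {P : K[X]} (hP : P ≠ 0) (a : K) :
    ∀ᶠ z in 𝓝[≠] a, P.eval z ≠ 0 := by
  have hfin : ({z | P.IsRoot z} \ {a}).Finite := (Polynomial.finite_setOfPred_isRoot hP).sdiff
  filter_upwards [eventually_nhdsWithin_of_eventually_nhds
    (hfin.isClosed.isOpen_compl.mem_nhds (by simp)), self_mem_nhdsWithin] with z hz hza hroot
  exact hz ⟨hroot, hza⟩

theorem eval_det_one_add_X_smul {K n : Type*} [CommRing K] [Fintype n] [DecidableEq n]
    (A : Matrix n n K) (g : K) : (det (1 + (X : K[X]) • A.map C)).eval g = det (1 + g • A) := by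
  rw [← coe_evalRingHom, RingHom.map_det]
  congr 1
  ext i j
  simp [Matrix.one_apply, apply_ite]
  ring

theorem eventually_nhdsNE_det_one_add_smul_ne_zero {K n : Type*} [Field K] [TopologicalSpace K]
    [T1Space K] [Fintype n] [DecidableEq n] (A : Matrix n n K) (a : K) :
    ∀ᶠ g in 𝓝[≠] a, det (1 + g • A) ≠ 0 := by
  have hP : det (1 + (X : K[X]) • A.map C) ≠ 0 := fun h => by
    have h0 := congrArg (eval 0) h
    rw [eval_det_one_add_X_smul, eval_zero, zero_smul, add_zero, det_one] at h0
    exact one_ne_zero h0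
  simpa only [eval_det_one_add_X_smul] using Polynomial.eventually_nhdsNE_eval_ne_zero hP a

theorem continuous_det_one_add_smul {K n : Type*} [Field K] [TopologicalSpace K]
    [IsTopologicalRing K] [Fintype n] [DecidableEq n] (A : Matrix n n K) :
    Continuous fun g : K => det (1 + g • A) := by
  fun_prop

theorem tendsto_norm_div_atTop {α 𝕜 : Type*} [NormedField 𝕜] {l : Filter α} {f g : α → 𝕜}
    {b : 𝕜} (hf : Tendsto f l (𝓝 b)) (hb : b ≠ 0) (hg : Tendsto g l (𝓝[≠] 0)) :
    Tendsto (fun x => ‖f x / g x‖) l atTop := by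
  simp_rw [div_eq_mul_inv, norm_mul]
  exact hf.norm.pos_mul_atTop (norm_pos_iff.2 hb) (tendsto_norm_inv_nhdsNE_zero_atTop.comp hg)

theorem tendsto_norm_inv_one_add_smul_apply_zero_zero {𝕜 : Type*} [NormedField 𝕜] {n : ℕ}
    {A : Matrix (Fin (n + 1)) (Fin (n + 1)) 𝕜} {μ : 𝕜} (hμ : μ ≠ 0) (hA : IsEig A μ)
    (hA' : ¬ IsEig (A.submatrix Fin.succ Fin.succ) μ) :
    Tendsto (fun g : 𝕜 => ‖(1 + g • A)⁻¹ 0 0‖) (𝓝[≠] (-μ⁻¹)) atTop := by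
  have hsub (g : 𝕜) : (1 + g • A).submatrix Fin.succ Fin.succ
      = 1 + g • A.submatrix Fin.succ Fin.succ := by
    ext i j
    simp [Matrix.one_apply]
  simp_rw [inv_apply_zero_zero, hsub]
  have hden := (continuous_det_one_add_smul A).tendsto (-μ⁻¹)
  rw [(det_one_add_neg_inv_smul_eq_zero_iff hμ).2 hA] at hden
  exact tendsto_norm_div_atTop
    (((continuous_det_one_add_smul _).tendsto _).mono_left nhdsWithin_le_nhds)
    ((det_one_add_neg_inv_smul_eq_zero_iff hμ).not.2 hA')
    (tendsto_nhdsWithin_iff.2 ⟨hden.mono_left nhdsWithin_le_nhds,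
      eventually_nhdsNE_det_one_add_smul_ne_zero A _⟩)

namespace RatFunc

theorem nhds_zero_le_map_inv_eval {G : RatFunc ℂ} {p : ℂ} (hpole : G.denom.eval p = 0) :
    𝓝 0 ≤ Filter.map (fun z => (G.eval (RingHom.id ℂ) z)⁻¹) (𝓝 p) := by
  have hnum : G.num.eval p ≠ 0 := by
    simpa [hpole] using aeval_ne_zero_of_isCoprime G.isCoprime_num_denom p
  have hinv : (fun z => (G.eval (RingHom.id ℂ) z)⁻¹) = fun z => G.denom.eval z / G.num.eval z :=
    funext fun z => inv_div _ _
  have han : AnalyticAt ℂ (fun z => G.denom.eval z / G.num.eval z) p :=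
    (G.denom.differentiable.analyticAt p).div (G.num.differentiable.analyticAt p) hnum
  rw [hinv]
  refine (han.eventually_constant_or_nhds_le_map_nhds.resolve_left fun hconst => ?_).trans'
    (by simp [hpole])
  have hden : ∀ᶠ z in 𝓝 p, G.denom.eval z = 0 := by
    filter_upwards [hconst, G.num.continuousAt.eventually_ne hnum] with z hz hz'
    simpa [hpole, hz'] using hz
  obtain ⟨z, hz, hz'⟩ := ((eventually_nhdsWithin_of_eventually_nhds hden).and
    (Polynomial.eventually_nhdsNE_eval_ne_zero G.denom_ne_zero p)).exists
  exact hz' hz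

theorem cobounded_le_map_eval {G : RatFunc ℂ} {p : ℂ} (hpole : G.denom.eval p = 0) :
    cobounded ℂ ≤ Filter.map (G.eval (RingHom.id ℂ)) (𝓝 p) := by
  have h := nhds_zero_le_map_inv_eval hpole
  rw [← Function.comp_def Inv.inv, ← Filter.map_map] at h
  calc cobounded ℂ ≤ comap Inv.inv (𝓝 0) := tendsto_inv₀_cobounded.le_comap
    _ ≤ comap Inv.inv (Filter.map Inv.inv (Filter.map (G.eval (RingHom.id ℂ)) (𝓝 p))) :=
      comap_mono h
    _ = Filter.map (G.eval (RingHom.id ℂ)) (𝓝 p) := comap_map inv_injective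

end RatFunc

/-- If `G = PC` has a pole at `p` in the open right half-plane, then for some `N` the
sensitivity `S_N` has a pole in the closed right half-plane (i.e. `det(I + G L_N)` vanishes
there); equivalently `sup_N ‖S_N‖_∞ = ∞`. -/
theorem unstable_pole_unbounded (G : RatFunc ℂ) (p : ℂ) (hp : 0 < p.re)
    (hpole : G.denom.eval p = 0) :
    (∃ N : ℕ, ∃ z : ℂ, 0 ≤ z.re ∧
        Matrix.det (1 + (G.eval (RingHom.id ℂ) z) • Lmat ℂ N) = 0) ∧
    (∀ K : ℝ, ∃ (N : ℕ) (hN : 0 < N), ∃ z : ℂ, 0 < z.re ∧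
        K < ‖(1 + (G.eval (RingHom.id ℂ) z) • Lmat ℂ N)⁻¹ ⟨0, hN⟩ ⟨0, hN⟩‖) := by
  have hRHP : G.eval (RingHom.id ℂ) '' {z | 0 < z.re} ∈ cobounded ℂ :=
    RatFunc.cobounded_le_map_eval hpole
      (image_mem_map ((isOpen_lt continuous_const Complex.continuous_re).mem_nhds hp))
  obtain ⟨R, -, hR⟩ := Filter.hasBasis_cobounded_norm.mem_iff.1 hRHP
  obtain ⟨n, hn⟩ : ∃ n, R < (lmatEig (n + 1))⁻¹ :=
    ((tendsto_inv_nhdsGT_zero.comp (tendsto_lmatEig.comp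
       (tendsto_add_atTop_nat 1))).eventually_gt_atTop R).exists
  set μ : ℂ := ↑(lmatEig (n + 1))
  have hμ : μ ≠ 0 := Complex.ofReal_ne_zero.2 (lmatEig_pos n.succ_pos).ne'
  have hfar : ∀ᶠ g in 𝓝 (-μ⁻¹), R < ‖g‖ :=
    (isOpen_lt continuous_const continuous_norm).mem_nhds
      (by simpa [μ, abs_of_pos (lmatEig_pos n.succ_pos)] using hn)
  refine ⟨?_, fun K => ?_⟩
  · obtain ⟨z, hz, hGz⟩ := hR hfar.self_of_nhds.le
    refine ⟨n + 1, z, hz.le, ?_⟩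
    rw [show G.eval (RingHom.id ℂ) z = -μ⁻¹ from hGz]
    exact (det_one_add_neg_inv_smul_eq_zero_iff hμ).2 (isEig_Lmat n.succ_pos)
  · have hblow := tendsto_norm_inv_one_add_smul_apply_zero_zero hμ (isEig_Lmat n.succ_pos)
      (by rw [Lmat_submatrix_succ]; exact not_isEig_Lbar n)
    obtain ⟨g, hgK, hgR⟩ :=
      ((hblow.eventually_gt_atTop K).and (eventually_nhdsWithin_of_eventually_nhds hfar)).exists
    obtain ⟨z, hz, rfl⟩ := hR hgR.le
    exact ⟨n + 1, n.succ_pos, z, hz, hgK⟩
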